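/- In the ring of MacMahon symmetric functions, for a bipartite partition Λ with multiplicities c_{(i,j)} (the number of parts of Λ equal to (i,j)) and any (a,b) ∈ ℕ×ℕ \ {(0,0)}, the product satisfies: m_{(a,b)} · m_Λ = (c_{(a,b)}+1) · m_{(a,b)Λ} + Σ_{(i,j): c_{(i,j)}>0} (c_{(a+i,b+j)}+1) · m_{(a+i,b+j)(Λ∖(i,j))}. -/

import Mathlib

/-!
The coefficient of a monomial `d` in `m_u · m_Λ` counts the splittings `d = e + f` with `e` of
shape `{u}` and `f` of shape `Λ`. Such an `e` is `x_i^{u.1} y_i^{u.2}` for a single index `i`, so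
the coefficient counts, with multiplicity, the parts `v ≥ u` of the shape `M` of `d` that turn
`M` into `Λ` when lowered to `v - u` (and dropped if that is `0`). A part `v = u` does so exactly
when `M = u Λ`, a part `v = u + p` with `p ≠ 0` exactly when `M = (u + p) (Λ ∖ p)`; the number of
such parts is then the multiplicity `c_u + 1`, resp. `c_{u+p} + 1`, of `v` in `M`.
-/

/-- The monomial MacMahon symmetric function `m_Λ` attached to a bipartite partition
`Λ` (a multiset of vectors in `ℕ×ℕ`), as a formal power series in two families of
variables `xᵢ = X (i,0)`, `yᵢ = X (i,1)`: the sum, with coefficients `0` or `1`, of all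
monomials whose multiset of exponent pairs equals `Λ`. -/
noncomputable def mm (Λ : Multiset (ℕ × ℕ)) : MvPowerSeries (ℕ × Fin 2) ℂ :=
  fun d => if (d.support.image Prod.fst).val.map
      (fun i => (d (i, 0), d (i, 1))) = Λ then 1 else 0

namespace MacMahon

section

variable {α R : Type*} [DecidableEq α] [Semiring R]

def consNonzero [Zero α] (q : α) (N : Multiset α) : Multiset α :=
  if q = 0 then N else q ::ₘ N

lemma cons_eq_iff_mem_and_eq_erase {q : α} {N L : Multiset α} :
    q ::ₘ N = L ↔ q ∈ L ∧ N = L.erase q := by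
  constructor
  · rintro rfl
    exact ⟨Multiset.mem_cons_self q N, (Multiset.erase_cons_head q N).symm⟩
  · rintro ⟨hq, rfl⟩
    exact Multiset.cons_erase hq

lemma sum_map_ite_eq_and_erase_eq (M L : Multiset α) (w : α) :
    (M.map fun v => if v = w ∧ M.erase v = L then (1 : R) else 0).sum =
      ((L.count w : R) + 1) * if M = w ::ₘ L then 1 else 0 := by
  have hterm : ∀ v ∈ M, (if v = w ∧ M.erase v = L then (1 : R) else 0) =
      if w = v then (if M = w ::ₘ L then 1 else 0) else 0 := by
    intro v hv
    by_cases h : v = w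
    · subst h
      simp [@eq_comm _ M, cons_eq_iff_mem_and_eq_erase, hv, @eq_comm _ L]
    · simp [h, Ne.symm h]
  rw [Multiset.map_congr rfl hterm, Finset.sum_multiset_map_count]
  simp_rw [smul_ite, smul_zero, Finset.sum_ite_eq, Multiset.mem_toFinset]
  by_cases hM : M = w ::ₘ L
  · subst hM
    simp [nsmul_eq_mul]
  · simp [hM]

variable [AddCommMonoid α] [PartialOrder α] [CanonicallyOrderedAdd α] [Sub α] [OrderedSub α]
  [IsOrderedCancelAddMonoid α] [DecidableLE α]

lemma ite_le_and_consNonzero_eq (u v : α) (N : Multiset α) {Λ : Multiset α} (hΛ : 0 ∉ Λ) :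
    (if u ≤ v ∧ consNonzero (v - u) N = Λ then (1 : R) else 0) =
      (if v = u ∧ N = Λ then 1 else 0) +
        ∑ p ∈ Λ.toFinset, if v = u + p ∧ N = Λ.erase p then 1 else 0 := by
  by_cases hvu : v = u
  · subst hvu
    have hzero : ∀ p ∈ Λ.toFinset, ¬ (v = v + p ∧ N = Λ.erase p) := by
      rintro p hp ⟨h, -⟩
      rw [left_eq_add.mp h, Multiset.mem_toFinset] at hp
      exact hΛ hp
    rw [Finset.sum_ite_of_false hzero]
    simp [consNonzero]
  by_cases huv : u ≤ v
  · obtain ⟨q, rfl⟩ := exists_add_of_le huv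
    have hq : q ≠ 0 := by rintro rfl; simp at hvu
    rw [add_tsub_cancel_left]
    simp only [consNonzero, if_neg hq, hvu, false_and, if_false, zero_add, add_right_inj,
      le_self_add, true_and, cons_eq_iff_mem_and_eq_erase, ite_and, Finset.sum_ite_eq,
      Multiset.mem_toFinset]
  · have hzero : ∀ p ∈ Λ.toFinset, ¬ (v = u + p ∧ N = Λ.erase p) :=
      fun p _ h => huv (h.1 ▸ le_self_add)
    simp [huv, hvu, Finset.sum_ite_of_false hzero]

theorem sum_map_ite_le_and_consNonzero_eq {u : α} (hu : u ≠ 0) {Λ : Multiset α} (hΛ : 0 ∉ Λ)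
    (M : Multiset α) :
    (M.map fun v => if u ≤ v ∧ consNonzero (v - u) (M.erase v) = Λ then (1 : R) else 0).sum =
      ((Λ.count u : R) + 1) * (if M = u ::ₘ Λ then 1 else 0) +
        ∑ p ∈ Λ.toFinset,
          ((Λ.count (u + p) : R) + 1) * if M = (u + p) ::ₘ Λ.erase p then 1 else 0 := by
  simp_rw [ite_le_and_consNonzero_eq (R := R) _ _ _ hΛ, Multiset.sum_map_add,
    sum_map_ite_eq_and_erase_eq, Finset.sum_eq_multiset_sum]
  rw [Multiset.sum_map_sum_map]
  simp_rw [sum_map_ite_eq_and_erase_eq]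
  congr 2
  refine Multiset.map_congr rfl fun p _ => ?_
  rw [Multiset.count_erase_of_ne]
  exact fun h => hu (add_eq_right.mp h)

end

section

variable {d e : (ℕ × Fin 2) →₀ ℕ} {i : ℕ} {u : ℕ × ℕ}

def bideg (d : (ℕ × Fin 2) →₀ ℕ) (i : ℕ) : ℕ × ℕ := (d (i, 0), d (i, 1))

def indices (d : (ℕ × Fin 2) →₀ ℕ) : Finset ℕ := d.support.image Prod.fst

def shape (d : (ℕ × Fin 2) →₀ ℕ) : Multiset (ℕ × ℕ) := (indices d).val.map (bideg d)

lemma coeff_mm (Λ : Multiset (ℕ × ℕ)) (d : (ℕ × Fin 2) →₀ ℕ) :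
    MvPowerSeries.coeff d (mm Λ) = if shape d = Λ then 1 else 0 := rfl

lemma mem_indices : i ∈ indices d ↔ bideg d i ≠ 0 := by
  simp [indices, bideg, Fin.exists_fin_two, or_iff_not_imp_left]

lemma bideg_injective : Function.Injective bideg := by
  intro d e h
  ext ⟨i, ε⟩
  fin_cases ε
  · exact congrArg Prod.fst (congrFun h i)
  · exact congrArg Prod.snd (congrFun h i)

lemma bideg_sub (d e : (ℕ × Fin 2) →₀ ℕ) (i : ℕ) : bideg (d - e) i = bideg d i - bideg e i :=
  rfl

lemma le_iff_forall_bideg_le : d ≤ e ↔ ∀ i, bideg d i ≤ bideg e i := by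
  simp [Finsupp.le_def, bideg, Prod.forall, Fin.forall_fin_two, forall_and]

noncomputable def bisingle (i : ℕ) (u : ℕ × ℕ) : (ℕ × Fin 2) →₀ ℕ :=
  Finsupp.single (i, 0) u.1 + Finsupp.single (i, 1) u.2

lemma bideg_bisingle : bideg (bisingle i u) = Pi.single i u := by
  funext j
  by_cases hj : j = i
  · subst hj; simp [bideg, bisingle]
  · simp [bideg, bisingle, hj]

lemma bisingle_le_iff : bisingle i u ≤ d ↔ u ≤ bideg d i := by
  rw [le_iff_forall_bideg_le, bideg_bisingle]
  refine ⟨fun h => by simpa using h i, fun h j => ?_⟩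
  by_cases hj : j = i
  · subst hj; simpa using h
  · simp [hj]

lemma bisingle_left_injective (hu : u ≠ 0) : Function.Injective (bisingle · u) := by
  intro i j h
  have := congrFun (congrArg bideg h) i
  simp only [bideg_bisingle, Pi.single_eq_same, Pi.single_apply] at this
  by_contra hij
  exact hu (by simpa [hij] using this)

lemma shape_eq_cons (hi : i ∈ indices d) :
    shape d = bideg d i ::ₘ ((indices d).erase i).val.map (bideg d) := by
  rw [shape, ← Multiset.map_cons, Finset.erase_val, Multiset.cons_erase hi]

lemma shape_eq_consNonzero_erase (hi : i ∈ indices d) (h : ∀ j ≠ i, bideg e j = bideg d j) :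
    shape e = consNonzero (bideg e i) ((shape d).erase (bideg d i)) := by
  have herase : (indices e).erase i = (indices d).erase i := by
    ext j
    simp only [Finset.mem_erase, mem_indices]
    exact and_congr_right fun hj => by rw [h j hj]
  have hrest : ((indices e).erase i).val.map (bideg e) = (shape d).erase (bideg d i) := by
    rw [shape_eq_cons hi, Multiset.erase_cons_head, herase]
    exact Multiset.map_congr rfl fun j hj => h j (Finset.ne_of_mem_erase hj)
  rw [consNonzero, ← hrest]
  split_ifs with h0
  · rw [shape, Finset.erase_eq_of_notMem (mt mem_indices.mp (not_not.mpr h0))]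
  · exact shape_eq_cons (mem_indices.mpr h0)

lemma shape_sub_bisingle (hi : i ∈ indices d) :
    shape (d - bisingle i u) = consNonzero (bideg d i - u) ((shape d).erase (bideg d i)) := by
  have hbideg : ∀ j, bideg (d - bisingle i u) j = bideg d j - (Pi.single i u : ℕ → ℕ × ℕ) j := by
    simp [bideg_sub, bideg_bisingle]
  rw [shape_eq_consNonzero_erase hi fun j hj => by simp [hbideg, hj], hbideg, Pi.single_eq_same]

lemma shape_bisingle (hu : u ≠ 0) : shape (bisingle i u) = {u} := by
  have : indices (bisingle i u) = {i} := by
    ext j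
    by_cases hj : j = i <;> simp [mem_indices, bideg_bisingle, hj, hu]
  simp [shape, this, bideg_bisingle]

lemma exists_eq_bisingle_of_shape_eq_singleton (h : shape e = {u}) : ∃ i, e = bisingle i u := by
  obtain ⟨i, hi⟩ := Finset.card_eq_one.mp (by simpa [shape] using congrArg Multiset.card h)
  have hu : bideg e i = u := by simpa [shape, hi] using h
  refine ⟨i, bideg_injective (funext fun j => ?_)⟩
  rw [bideg_bisingle, Pi.single_apply]
  split_ifs with hj
  · rw [hj, hu]
  · by_contra hne
    exact hj (Finset.mem_singleton.mp (hi ▸ mem_indices.mpr hne))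

lemma filter_antidiagonal_shape_fst_eq_singleton (hu : u ≠ 0) (d : (ℕ × Fin 2) →₀ ℕ) :
    (Finset.HasAntidiagonal.antidiagonal d).filter (fun p => shape p.1 = {u}) =
      ((indices d).filter (u ≤ bideg d ·)).image fun i => (bisingle i u, d - bisingle i u) := by
  ext ⟨e, f⟩
  simp only [Finset.mem_filter, Finset.HasAntidiagonal.mem_antidiagonal, Finset.mem_image,
    Prod.mk.injEq]
  constructor
  · rintro ⟨rfl, he⟩
    obtain ⟨i, rfl⟩ := exists_eq_bisingle_of_shape_eq_singleton he
    have hle : u ≤ bideg (bisingle i u + f) i := bisingle_le_iff.mp le_self_add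
    exact ⟨i, ⟨mem_indices.mpr fun h0 => hu (nonpos_iff_eq_zero.mp (h0 ▸ hle)), hle⟩, rfl,
      add_tsub_cancel_left _ _⟩
  · rintro ⟨i, ⟨-, hle⟩, rfl, rfl⟩
    exact ⟨add_tsub_cancel_of_le (bisingle_le_iff.mpr hle), shape_bisingle hu⟩

lemma coeff_mm_singleton_mul (hu : u ≠ 0) (Λ : Multiset (ℕ × ℕ)) (d : (ℕ × Fin 2) →₀ ℕ) :
    MvPowerSeries.coeff d (mm {u} * mm Λ) =
      ∑ i ∈ indices d, if u ≤ bideg d i ∧ shape (d - bisingle i u) = Λ then 1 else 0 := by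
  simp only [MvPowerSeries.coeff_mul, coeff_mm, boole_mul, ite_and]
  rw [← Finset.sum_filter, filter_antidiagonal_shape_fst_eq_singleton hu,
    Finset.sum_image fun i _ j _ h => bisingle_left_injective hu (congrArg Prod.fst h),
    Finset.sum_filter]

lemma coeff_mm_singleton_mul_eq_sum_map_shape (hu : u ≠ 0) (Λ : Multiset (ℕ × ℕ))
    (d : (ℕ × Fin 2) →₀ ℕ) :
    MvPowerSeries.coeff d (mm {u} * mm Λ) =
      ((shape d).map fun v =>
        if u ≤ v ∧ consNonzero (v - u) ((shape d).erase v) = Λ then (1 : ℂ) else 0).sum := by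
  rw [coeff_mm_singleton_mul hu]
  refine (Finset.sum_congr rfl fun i hi => ?_).trans
    (congrArg Multiset.sum (Multiset.map_map _ (bideg d) (indices d).val)).symm
  exact if_congr (and_congr_right fun _ => by rw [shape_sub_bisingle hi]) rfl rfl

end

end MacMahon

/-- Multiplication rule: `m_{(a,b)} · m_Λ = (c_{(a,b)}+1) m_{(a,b)Λ}
+ Σ_{(i,j): c_{(i,j)}>0} (c_{(a+i,b+j)}+1) m_{(a+i,b+j)(Λ∖(i,j))}`, where `c_{(i,j)}`
is the multiplicity of `(i,j)` in `Λ`. -/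
theorem stmt5 (a b : ℕ) (hab : (a, b) ≠ ((0 : ℕ), (0 : ℕ)))
    (Λ : Multiset (ℕ × ℕ)) (hΛ : (0, 0) ∉ Λ) :
    mm {(a, b)} * mm Λ =
      ((Λ.count (a, b) : ℂ) + 1) • mm ((a, b) ::ₘ Λ) +
      ∑ p ∈ Λ.toFinset, ((Λ.count (a + p.1, b + p.2) : ℂ) + 1) •
        mm ((a + p.1, b + p.2) ::ₘ Λ.erase p) := by
  ext d
  rw [MacMahon.coeff_mm_singleton_mul_eq_sum_map_shape hab,
    MacMahon.sum_map_ite_le_and_consNonzero_eq hab hΛ]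
  simp only [map_add, map_sum, MvPowerSeries.coeff_smul, MacMahon.coeff_mm]
  -- `(a, b) + p` unfolds to `(a + p.1, b + p.2)`
  rfl
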